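/- Let A be a unital algebra with derivation ∂ and norms ‖x‖_n = Σ_{k=0}^n (1/k!)‖∂^k(x)‖ where ‖·‖ is a submultiplicative norm. Then for every a ∈ A and every n ≥ 1 there exists a constant η ≥ 0 (depending on a and n) such that ‖a·x‖_n ≤ ‖a‖_0 ‖x‖_n + η ‖x‖_{n-1} for all x ∈ A. -/

import Mathlib

lemma iter_leib {A : Type*} [Ring A] (d : A → A)
    (hadd : ∀ a b : A, d (a + b) = d a + d b)
    (hleib : ∀ a b : A, d (a * b) = d a * b + a * d b) :
    ∀ (k : ℕ) (a x : A), d^[k] (a * x)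
      = ∑ j ∈ Finset.range (k+1), k.choose j • (d^[j] a * d^[k-j] x) := by
  intro k
  induction k with
  | zero => intro a x; simp
  | succ k ih =>
    intro a x
    set D : A →+ A := AddMonoidHom.mk' d hadd with hD
    have hdD : ∀ y : A, d y = D y := fun y => rfl
    rw [Function.iterate_succ_apply', ih, hdD, map_sum]
    have step : ∀ j ∈ Finset.range (k+1),
        D (k.choose j • (d^[j] a * d^[k-j] x))
        = k.choose j • (d^[j+1] a * d^[k-j] x) + k.choose j • (d^[j] a * d^[k+1-j] x) := by
      intro j hj
      rw [Finset.mem_range] at hj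
      have hjk : j ≤ k := Nat.lt_succ_iff.mp hj
      have h1 : k + 1 - j = (k - j) + 1 := by omega
      rw [map_nsmul, ← hdD, hleib, smul_add, ← Function.iterate_succ_apply' d j a,
        h1, ← Function.iterate_succ_apply' d (k-j) x]
    rw [Finset.sum_congr rfl step, Finset.sum_add_distrib]
    -- now RHS rearrangement
    have key : ∑ j ∈ Finset.range (k+2), (k+1).choose j • (d^[j] a * d^[k+1-j] x)
        = (∑ j ∈ Finset.range (k+1), k.choose j • (d^[j+1] a * d^[k-j] x))
          + ∑ j ∈ Finset.range (k+1), k.choose j • (d^[j] a * d^[k+1-j] x) := by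
      rw [Finset.sum_range_succ']
      have h2 : ∀ j ∈ Finset.range (k+1),
          (k+1).choose (j+1) • (d^[j+1] a * d^[k+1-(j+1)] x)
          = k.choose j • (d^[j+1] a * d^[k-j] x) + k.choose (j+1) • (d^[j+1] a * d^[k-j] x) := by
        intro j hj
        have h3 : k + 1 - (j+1) = k - j := by omega
        rw [h3, Nat.choose_succ_succ, add_smul]
      rw [Finset.sum_congr rfl h2, Finset.sum_add_distrib, add_assoc]
      congr 1
      have h4 : ∑ j ∈ Finset.range (k+2), k.choose j • (d^[j] a * d^[k+1-j] x)
          = (∑ j ∈ Finset.range (k+1), k.choose (j+1) • (d^[j+1] a * d^[k+1-(j+1)] x))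
            + k.choose 0 • (d^[0] a * d^[k+1-0] x) := Finset.sum_range_succ' _ _
      have h5 : ∑ j ∈ Finset.range (k+2), k.choose j • (d^[j] a * d^[k+1-j] x)
          = ∑ j ∈ Finset.range (k+1), k.choose j • (d^[j] a * d^[k+1-j] x) := by
        rw [Finset.sum_range_succ]
        simp [Nat.choose_succ_self]
      rw [← h5, h4]
      congr 1
      · apply Finset.sum_congr rfl
        intro j hj
        have h3 : k + 1 - (j+1) = k - j := by omega
        rw [h3]
      · simp
    rw [key]

/-- For every `a` and `n ≥ 1` there is `η ≥ 0` with
`‖a·x‖ₙ ≤ ‖a‖₀‖x‖ₙ + η‖x‖_{n-1}` for all `x`, where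
`‖x‖ₙ = ∑_{k=0}^n (1/k!)‖d^k x‖`. -/
theorem stmt4 {A : Type*} [NormedRing A]
    (d : A → A) (hadd : ∀ a b : A, d (a + b) = d a + d b)
    (hleib : ∀ a b : A, d (a * b) = d a * b + a * d b)
    (a : A) (n : ℕ) (hn : 1 ≤ n) :
    ∃ η : ℝ, 0 ≤ η ∧ ∀ x : A,
      ∑ k ∈ Finset.range (n+1), (k.factorial : ℝ)⁻¹ * ‖d^[k] (a * x)‖ ≤
        ‖a‖ * (∑ k ∈ Finset.range (n+1), (k.factorial : ℝ)⁻¹ * ‖d^[k] x‖)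
        + η * (∑ k ∈ Finset.range n, (k.factorial : ℝ)⁻¹ * ‖d^[k] x‖) := by
  set c : ℕ → ℝ := fun j => (j.factorial : ℝ)⁻¹ * ‖d^[j] a‖ with hcdef
  have hc : ∀ j, 0 ≤ c j := fun j => by positivity
  refine ⟨n * ∑ j ∈ Finset.range n, c (j+1), by positivity, fun x => ?_⟩
  set m : ℕ → ℝ := fun i => (i.factorial : ℝ)⁻¹ * ‖d^[i] x‖ with hmdef
  have hm : ∀ i, 0 ≤ m i := fun i => by positivity
  set M : ℝ := ∑ i ∈ Finset.range n, m i with hMdef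
  have hMnn : 0 ≤ M := Finset.sum_nonneg fun i _ => hm i
  have hmM : ∀ i < n, m i ≤ M := fun i hi =>
    Finset.single_le_sum (f := m) (fun j _ => hm j) (Finset.mem_range.mpr hi)
  have hfac : ∀ j k : ℕ, j ≤ k →
      (k.factorial : ℝ)⁻¹ * (k.choose j : ℝ) = (j.factorial : ℝ)⁻¹ * ((k-j).factorial : ℝ)⁻¹ := by
    intro j k hjk
    have h := Nat.choose_mul_factorial_mul_factorial hjk
    have h' : (k.choose j : ℝ) * (j.factorial : ℝ) * ((k-j).factorial : ℝ) = (k.factorial : ℝ) := by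
      exact_mod_cast congrArg (Nat.cast : ℕ → ℝ) h
    have h1 : (j.factorial : ℝ) ≠ 0 := Nat.cast_ne_zero.mpr (Nat.factorial_ne_zero j)
    have h2 : ((k-j).factorial : ℝ) ≠ 0 := Nat.cast_ne_zero.mpr (Nat.factorial_ne_zero _)
    have h3 : (k.factorial : ℝ) ≠ 0 := Nat.cast_ne_zero.mpr (Nat.factorial_ne_zero k)
    field_simp
    nlinarith [h']
  -- pointwise bound
  have hb : ∀ k : ℕ, (k.factorial : ℝ)⁻¹ * ‖d^[k] (a * x)‖
      ≤ ∑ j ∈ Finset.range (k+1), c j * m (k-j) := by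
    intro k
    have hnorm : ‖d^[k] (a * x)‖
        ≤ ∑ j ∈ Finset.range (k+1), (k.choose j : ℝ) * (‖d^[j] a‖ * ‖d^[k-j] x‖) := by
      rw [iter_leib d hadd hleib]
      refine (norm_sum_le _ _).trans (Finset.sum_le_sum fun j _ => ?_)
      calc ‖k.choose j • (d^[j] a * d^[k-j] x)‖
          ≤ (k.choose j : ℝ) * ‖d^[j] a * d^[k-j] x‖ := norm_nsmul_le
        _ ≤ (k.choose j : ℝ) * (‖d^[j] a‖ * ‖d^[k-j] x‖) := by
            exact mul_le_mul_of_nonneg_left (norm_mul_le _ _) (by positivity)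
    calc (k.factorial : ℝ)⁻¹ * ‖d^[k] (a * x)‖
        ≤ (k.factorial : ℝ)⁻¹ * ∑ j ∈ Finset.range (k+1),
            (k.choose j : ℝ) * (‖d^[j] a‖ * ‖d^[k-j] x‖) := by
          exact mul_le_mul_of_nonneg_left hnorm (by positivity)
      _ = ∑ j ∈ Finset.range (k+1), c j * m (k-j) := by
          rw [Finset.mul_sum]
          refine Finset.sum_congr rfl fun j hj => ?_
          have hjk : j ≤ k := Nat.lt_succ_iff.mp (Finset.mem_range.mp hj)
          have := hfac j k hjk
          simp only [hcdef, hmdef]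
          rw [← mul_assoc, this]
          ring
  -- sum over k
  have hsum : ∑ k ∈ Finset.range (n+1), (k.factorial : ℝ)⁻¹ * ‖d^[k] (a * x)‖
      ≤ ∑ k ∈ Finset.range (n+1), ∑ j ∈ Finset.range (k+1), c j * m (k-j) :=
    Finset.sum_le_sum fun k _ => hb k
  have hsplit : ∀ k : ℕ, ∑ j ∈ Finset.range (k+1), c j * m (k-j)
      = (∑ j ∈ Finset.range k, c (j+1) * m (k-(j+1))) + ‖a‖ * m k := by
    intro k
    rw [Finset.sum_range_succ']
    congr 1
    simp [hcdef]
  have hg : ∀ k < n, ∑ j ∈ Finset.range (k+1), c (j+1) * m (k+1-(j+1))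
      ≤ (∑ j ∈ Finset.range n, c (j+1)) * M := by
    intro k hk
    calc ∑ j ∈ Finset.range (k+1), c (j+1) * m (k+1-(j+1))
        ≤ ∑ j ∈ Finset.range (k+1), c (j+1) * M := by
          refine Finset.sum_le_sum fun j hj => ?_
          have : k+1-(j+1) < n := by omega
          exact mul_le_mul_of_nonneg_left (hmM _ this) (hc _)
      _ = (∑ j ∈ Finset.range (k+1), c (j+1)) * M := by rw [Finset.sum_mul]
      _ ≤ (∑ j ∈ Finset.range n, c (j+1)) * M := by
          refine mul_le_mul_of_nonneg_right ?_ hMnn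
          refine Finset.sum_le_sum_of_subset_of_nonneg ?_ (fun j _ _ => hc _)
          exact Finset.range_subset_range.mpr (by omega)
  calc ∑ k ∈ Finset.range (n+1), (k.factorial : ℝ)⁻¹ * ‖d^[k] (a * x)‖
      ≤ ∑ k ∈ Finset.range (n+1), ∑ j ∈ Finset.range (k+1), c j * m (k-j) := hsum
    _ = (∑ k ∈ Finset.range (n+1), ∑ j ∈ Finset.range k, c (j+1) * m (k-(j+1)))
        + ‖a‖ * ∑ k ∈ Finset.range (n+1), m k := by
        rw [Finset.mul_sum, ← Finset.sum_add_distrib]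
        exact Finset.sum_congr rfl fun k _ => hsplit k
    _ = (∑ k ∈ Finset.range n, ∑ j ∈ Finset.range (k+1), c (j+1) * m (k+1-(j+1)))
        + ‖a‖ * ∑ k ∈ Finset.range (n+1), m k := by
        congr 1
        rw [Finset.sum_range_succ' (fun k => ∑ j ∈ Finset.range k, c (j+1) * m (k-(j+1)))]
        simp
    _ ≤ (∑ k ∈ Finset.range n, (∑ j ∈ Finset.range n, c (j+1)) * M)
        + ‖a‖ * ∑ k ∈ Finset.range (n+1), m k := by
        refine add_le_add_left (Finset.sum_le_sum fun k hk => hg k (Finset.mem_range.mp hk)) _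
    _ = ‖a‖ * (∑ k ∈ Finset.range (n+1), m k)
        + (n * ∑ j ∈ Finset.range n, c (j+1)) * M := by
        rw [Finset.sum_const, Finset.card_range]
        ring
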